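/- arXiv:2111.10211 — 4 statements merged into one kernel-verified Lean document; each statement's English description precedes it below -/
import Mathlib

section
/- For every integer m ≥ 0, the number consisting of the digit 1, followed by m nines, followed by the digit 8 in base ten (i.e., 2·10^{m+1} − 2, e.g., 18, 198, 1998, ...) is a v-palindrome in base 10. -/
/-- `v n` sums, over the prime factorization of `n`, each prime plus its
exponent when the exponent is at least `2` (primes with exponent `1`
contribute just the prime). -/
def v (n : ℕ) : ℕ :=
  ∑ p ∈ n.primeFactors, (p + if 2 ≤ n.factorization p then n.factorization p else 0)

/-- Base-`b` digit reversal. -/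
def revDigits (b n : ℕ) : ℕ := Nat.ofDigits b (Nat.digits b n).reverse

/-- `n` is a v-palindrome in base `b`. -/
def IsVPalindrome (b n : ℕ) : Prop :=
  ¬ b ∣ n ∧ n ≠ revDigits b n ∧ v n = v (revDigits b n)

/-!
Write `n = 2 * 10 ^ (m + 1) - 2 = 2 N` with `N = 10 ^ (m + 1) - 1 = 99…9`. Its digits are
`1 9…9 8`, so its reversal `8 9…9 1` is `9 N`. Since `N` is odd, multiplying it by `2` adds
the new prime `2` with exponent `1`, raising `v` by `2`; since `9 ∣ N`, multiplying it by
`9 = 3 ^ 2` raises an exponent of `3` that is already at least `2` by `2`, again raising `v`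
by `2`. Hence `v (2 N) = v N + 2 = v (9 N)`.
-/

lemma factorization_prime_pow_mul {p k N : ℕ} (hp : p.Prime) (hN : N ≠ 0) :
    (p ^ k * N).factorization = Finsupp.single p k + N.factorization := by
  rw [Nat.factorization_mul (pow_ne_zero k hp.ne_zero) hN, hp.factorization_pow]

lemma v_prime_mul {p N : ℕ} (hp : p.Prime) (hpN : ¬ p ∣ N) : v (p * N) = p + v N := by
  have hN : N ≠ 0 := by rintro rfl; exact hpN (dvd_zero p)
  have hp_notMem : p ∉ N.primeFactors := fun h => hpN (Nat.dvd_of_mem_primeFactors h)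
  have hfact := factorization_prime_pow_mul (k := 1) hp hN
  rw [pow_one] at hfact
  have hsupp : (p * N).primeFactors = insert p N.primeFactors := by
    rw [Nat.primeFactors_mul hp.ne_zero hN, hp.primeFactors, Finset.insert_eq]
  unfold v
  rw [hsupp, Finset.sum_insert hp_notMem, hfact]
  refine congrArg₂ (· + ·) (by simp [Nat.factorization_eq_zero_of_not_dvd hpN]) ?_
  refine Finset.sum_congr rfl fun q hq => ?_
  have hqp : q ≠ p := fun h => hp_notMem (h ▸ hq)
  simp [Finsupp.single_eq_of_ne hqp]

lemma v_prime_pow_mul_of_two_le_factorization {p k N : ℕ} (h : 2 ≤ N.factorization p) :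
    v (p ^ k * N) = k + v N := by
  have hpN : p ∈ N.primeFactors := by
    rw [← Nat.support_factorization, Finsupp.mem_support_iff]; omega
  obtain ⟨hp, -, hN⟩ := Nat.mem_primeFactors.mp hpN
  have hfact := factorization_prime_pow_mul (k := k) hp hN
  have hsupp : (p ^ k * N).primeFactors = N.primeFactors := by
    ext q
    rw [← Nat.support_factorization, ← Nat.support_factorization, hfact]
    by_cases hqp : q = p
    · subst hqp; simp only [Finsupp.mem_support_iff, Finsupp.add_apply]; omega
    · simp only [Finsupp.mem_support_iff, Finsupp.add_apply, Finsupp.single_eq_of_ne hqp,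
        zero_add]
  unfold v
  rw [hsupp, ← Finset.add_sum_erase _ _ hpN, ← Finset.add_sum_erase _ _ hpN, hfact,
    Finset.sum_congr rfl fun q hq => by
      rw [Finsupp.add_apply, Finsupp.single_eq_of_ne (Finset.ne_of_mem_erase hq), zero_add]]
  simp only [Finsupp.add_apply, Finsupp.single_eq_same]
  rw [if_pos (by omega), if_pos h]
  omega

lemma ofDigits_ten_cons_replicate_nine_append (a c m : ℕ) :
    Nat.ofDigits 10 (a :: List.replicate m 9 ++ [c]) + 10 = a + 10 ^ (m + 1) * (c + 1) := by
  have hnines : Nat.ofDigits 10 (List.replicate m 9) + 1 = 10 ^ m := by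
    induction m with
    | zero => rfl
    | succ m ih => rw [List.replicate_succ, Nat.ofDigits_cons, pow_succ]; omega
  rw [List.cons_append, Nat.ofDigits_cons, Nat.ofDigits_append, List.length_replicate,
    Nat.ofDigits_singleton, pow_succ]
  nlinarith

lemma revDigits_two_mul_ten_pow_sub_two (m : ℕ) :
    revDigits 10 (2 * 10 ^ (m + 1) - 2) = 9 * (10 ^ (m + 1) - 1) := by
  have hdigits : Nat.digits 10 (2 * 10 ^ (m + 1) - 2) = 8 :: List.replicate m 9 ++ [1] := by
    have hval := ofDigits_ten_cons_replicate_nine_append 8 1 m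
    rw [show 2 * 10 ^ (m + 1) - 2 = Nat.ofDigits 10 (8 :: List.replicate m 9 ++ [1]) by omega]
    refine Nat.digits_ofDigits 10 (by norm_num) _ (fun l hl => ?_) (by simp)
    simp only [List.cons_append, List.mem_cons, List.mem_append, List.mem_replicate,
      List.mem_nil_iff, or_false] at hl
    omega
  have hreverse : (8 :: List.replicate m 9 ++ [1]).reverse = 1 :: List.replicate m 9 ++ [8] := by
    simp
  have hval := ofDigits_ten_cons_replicate_nine_append 1 8 m
  rw [revDigits, hdigits, hreverse]
  omega

theorem stmt_3 (m : ℕ) : IsVPalindrome 10 (2 * 10 ^ (m + 1) - 2) := by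
  have hpow : 10 ^ (m + 1) = 10 * 10 ^ m := pow_succ' 10 m
  have hpos : 0 < 10 ^ m := by positivity
  set N := 10 ^ (m + 1) - 1 with hN
  have hn : 2 * 10 ^ (m + 1) - 2 = 2 * N := by omega
  have hrev := revDigits_two_mul_ten_pow_sub_two m
  rw [hn] at hrev ⊢
  have hN_odd : ¬ 2 ∣ N := by omega
  have h9 : 3 ^ 2 ∣ N := by simpa using Nat.sub_dvd_pow_sub_pow 10 1 (m + 1)
  have h3 : 2 ≤ N.factorization 3 :=
    (Nat.prime_three.pow_dvd_iff_le_factorization (by omega)).mp h9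
  refine ⟨by omega, by omega, ?_⟩
  rw [hrev, v_prime_mul Nat.prime_two hN_odd, show 9 = 3 ^ 2 from rfl,
    v_prime_pow_mul_of_two_le_factorization h3]
end

section
/- For every integer k ≥ 1, the number formed by concatenating k copies of the digits '18' in base ten, i.e., 18·(10^{2k} − 1)/99, is a v-palindrome in base 10. -/
open Finset

lemma v_eq_factorization_sum (n : ℕ) :
    v n = n.factorization.sum fun p e => p + if 2 ≤ e then e else 0 := by
  rw [v, Finsupp.sum, Nat.support_factorization]

lemma v_mul_of_coprime {m n : ℕ} (h : m.Coprime n) : v (m * n) = v m + v n := by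
  simp only [v_eq_factorization_sum, Nat.factorization_mul_of_coprime h]
  apply Finsupp.sum_add_index_of_disjoint
  simpa only [Nat.support_factorization] using h.disjoint_primeFactors

lemma v_prime_pow {p e : ℕ} (hp : p.Prime) (he : e ≠ 0) :
    v (p ^ e) = p + if 2 ≤ e then e else 0 := by
  rw [v_eq_factorization_sum, hp.factorization_pow, Finsupp.sum, Finsupp.support_single _ he,
    sum_singleton, Finsupp.single_eq_same]

lemma v_prime_pow_mul {p e m : ℕ} (hp : p.Prime) (he : e ≠ 0) (hpm : ¬ p ∣ m) :
    v (p ^ e * m) = p + (if 2 ≤ e then e else 0) + v m := by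
  rw [v_mul_of_coprime ((hp.coprime_iff_not_dvd.2 hpm).pow_left e), v_prime_pow hp he]

lemma v_eighteen_mul_eq_v_eighty_one_mul {R : ℕ} (hR : R ≠ 0) (hR2 : ¬ 2 ∣ R) :
    v (18 * R) = v (81 * R) := by
  set a := R.factorization 3
  set m := R / 3 ^ a
  have hRm : 3 ^ a * m = R := Nat.ordProj_mul_ordCompl_eq_self R 3
  have h3m : ¬ 3 ∣ m := Nat.not_dvd_ordCompl Nat.prime_three hR
  have h2m : ¬ 2 ∣ m := fun h => hR2 (h.trans (Nat.ordCompl_dvd R 3))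
  have h2 : ¬ 2 ∣ 3 ^ (a + 2) * m := by
    rw [Nat.Prime.dvd_mul Nat.prime_two, not_or]
    exact ⟨fun h => by simpa using Nat.prime_two.dvd_of_dvd_pow h, h2m⟩
  calc v (18 * R) = v (2 ^ 1 * (3 ^ (a + 2) * m)) := by rw [← hRm]; ring_nf
    _ = 2 + 3 + (a + 2) + v m := by
      rw [v_prime_pow_mul Nat.prime_two one_ne_zero h2,
        v_prime_pow_mul Nat.prime_three (by omega) h3m, if_neg (by omega), if_pos (by omega)]
      ring
    _ = v (3 ^ (a + 4) * m) := by
      rw [v_prime_pow_mul Nat.prime_three (by omega) h3m, if_pos (by omega)]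
      ring
    _ = v (81 * R) := by rw [← hRm]; ring_nf

lemma ofDigits_flatten_replicate (b : ℕ) (L : List ℕ) (k : ℕ) :
    Nat.ofDigits b (List.replicate k L).flatten =
      Nat.ofDigits b L * ∑ i ∈ range k, (b ^ L.length) ^ i := by
  induction k with
  | zero => simp
  | succ k ih =>
    rw [List.replicate_succ, List.flatten_cons, Nat.ofDigits_append, ih, geom_sum_succ]
    ring

lemma digits_mul_geom_sum {b : ℕ} (hb : 0 < b) (n k : ℕ) :
    b.digits (n * ∑ i ∈ range k, (b ^ (b.digits n).length) ^ i) =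
      (List.replicate k (b.digits n)).flatten := by
  induction k with
  | zero => simp
  | succ k ih =>
    rw [List.replicate_succ, List.flatten_cons, ← ih, Nat.digits_append_digits hb, geom_sum_succ]
    ring_nf

lemma revDigits_mul_geom_sum {b : ℕ} (hb : 0 < b) (n k : ℕ) :
    revDigits b (n * ∑ i ∈ range k, (b ^ (b.digits n).length) ^ i) =
      revDigits b n * ∑ i ∈ range k, (b ^ (b.digits n).length) ^ i := by
  rw [revDigits, digits_mul_geom_sum hb, List.reverse_flatten, List.map_replicate,
    List.reverse_replicate, ofDigits_flatten_replicate, List.length_reverse, revDigits]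

lemma geom_sum_succ_modEq_one (b k : ℕ) : ∑ i ∈ range (k + 1), b ^ i ≡ 1 [MOD b] := by
  rw [geom_sum_succ, Nat.ModEq, Nat.mul_add_mod]

theorem stmt_4 (k : ℕ) (hk : 1 ≤ k) : IsVPalindrome 10 (18 * ((10 ^ (2 * k) - 1) / 99)) := by
  set R := ∑ i ∈ range k, 100 ^ i with hR
  have hR_eq : (10 ^ (2 * k) - 1) / 99 = R := by
    rw [hR, Nat.geomSum_eq (by norm_num), pow_mul]; norm_num
  have hR_mod : R % 10 = 1 := by
    obtain ⟨j, rfl⟩ : ∃ j, k = j + 1 := ⟨k - 1, by omega⟩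
    have : R % 100 = 1 := geom_sum_succ_modEq_one 100 j
    omega
  have hrev : revDigits 10 (18 * R) = 81 * R := by
    simpa [revDigits, Nat.ofDigits, R] using revDigits_mul_geom_sum (b := 10) (by norm_num) 18 k
  rw [hR_eq]
  refine ⟨by omega, by omega, ?_⟩
  rw [hrev]
  exact v_eighteen_mul_eq_v_eighty_one_mul (by omega) (by omega)
end

section
/- If k ≡ 4 (mod 11) is a positive integer, then f(30k) = ((30k)² − 1)/11, where f(b) = lcm( (b²−1)/gcd(5b−6, b²−1), (b²−1)/gcd(6b−5, b²−1) ). -/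
/-!
Both gcds divide 11, because `25 (b² - 1) = (5b - 6)(5b + 6) + 11` and
`(6b - 5)(6b + 5) = 36 (b² - 1) + 11`. When `b ≡ -1 (mod 11)`, which is the case for `b = 30k`
with `k ≡ 4 (mod 11)`, 11 divides `b + 1`, `5b - 6` and `6b - 5`, so both gcds equal 11,
both quotients equal `(b² - 1)/11`, and the lcm is that common value.
-/

theorem Nat.gcd_dvd_of_mul_eq_mul_add {a b c d n : ℕ} (h : a * c = b * d + n) :
    Nat.gcd a b ∣ n :=
  (Nat.dvd_add_right (dvd_mul_of_dvd_left (Nat.gcd_dvd_right a b) d)).mp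
    (h ▸ dvd_mul_of_dvd_left (Nat.gcd_dvd_left a b) c)

section

variable {b : ℕ}

theorem gcd_five_mul_sub_six_sq_sub_one_dvd_eleven (hb : 2 ≤ b) :
    Nat.gcd (5 * b - 6) (b ^ 2 - 1) ∣ 11 := by
  have h : (b ^ 2 - 1) * 25 = (5 * b - 6) * (5 * b + 6) + 11 := by
    have : 1 ≤ b ^ 2 := Nat.one_le_pow _ _ (by omega)
    zify [this, show 6 ≤ 5 * b by omega]
    ring
  exact Nat.gcd_comm (b ^ 2 - 1) _ ▸ Nat.gcd_dvd_of_mul_eq_mul_add h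

theorem gcd_six_mul_sub_five_sq_sub_one_dvd_eleven (hb : 2 ≤ b) :
    Nat.gcd (6 * b - 5) (b ^ 2 - 1) ∣ 11 := by
  have h : (6 * b - 5) * (6 * b + 5) = (b ^ 2 - 1) * 36 + 11 := by
    have : 1 ≤ b ^ 2 := Nat.one_le_pow _ _ (by omega)
    zify [this, show 5 ≤ 6 * b by omega]
    ring
  exact Nat.gcd_dvd_of_mul_eq_mul_add h

theorem eleven_dvd_sq_sub_one (hb : b % 11 = 10) : 11 ∣ b ^ 2 - 1 :=
  have h : 11 ∣ b + 1 := by omega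
  (h.mul_right (b - 1)).trans (by rw [← Nat.sq_sub_sq, one_pow])

theorem lcm_div_gcd_eq_sq_sub_one_div_eleven (hb : b % 11 = 10) :
    Nat.lcm ((b ^ 2 - 1) / Nat.gcd (5 * b - 6) (b ^ 2 - 1))
        ((b ^ 2 - 1) / Nat.gcd (6 * b - 5) (b ^ 2 - 1)) =
      (b ^ 2 - 1) / 11 := by
  have h5 : Nat.gcd (5 * b - 6) (b ^ 2 - 1) = 11 :=
    Nat.dvd_antisymm (gcd_five_mul_sub_six_sq_sub_one_dvd_eleven (by omega))
      (Nat.dvd_gcd (by omega) (eleven_dvd_sq_sub_one hb))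
  have h6 : Nat.gcd (6 * b - 5) (b ^ 2 - 1) = 11 :=
    Nat.dvd_antisymm (gcd_six_mul_sub_five_sq_sub_one_dvd_eleven (by omega))
      (Nat.dvd_gcd (by omega) (eleven_dvd_sq_sub_one hb))
  rw [h5, h6, Nat.lcm_self]

end

theorem stmt_13_general (k : ℕ) (hmod : k % 11 = 4) :
    Nat.lcm (((30 * k) ^ 2 - 1) / Nat.gcd (5 * (30 * k) - 6) ((30 * k) ^ 2 - 1))
        (((30 * k) ^ 2 - 1) / Nat.gcd (6 * (30 * k) - 5) ((30 * k) ^ 2 - 1)) =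
      ((30 * k) ^ 2 - 1) / 11 :=
  lcm_div_gcd_eq_sq_sub_one_div_eleven (by omega)

theorem stmt_13 (k : ℕ) (hk : 0 < k) (hmod : k % 11 = 4) :
    Nat.lcm (((30 * k) ^ 2 - 1) / Nat.gcd (5 * (30 * k) - 6) ((30 * k) ^ 2 - 1))
        (((30 * k) ^ 2 - 1) / Nat.gcd (6 * (30 * k) - 5) ((30 * k) ^ 2 - 1)) =
      ((30 * k) ^ 2 - 1) / 11 :=
  stmt_13_general k hmod
end

section
/- If b ≡ 120 (mod 330) is a positive integer, then there exists a v-palindrome in base b. In particular, the set of bases b ≥ 2 admitting a v-palindrome has positive natural density. -/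
/-!
Write `b = 330 t + 120` and take the two-digit number `n` with digits `x = 150 t + 54` (leading)
and `y = 180 t + 65`. Then `n = 5 w` and its reversal is `6 w`, where
`w = (30 t + 11) (330 t + 119)` is coprime to `30`. Since `v` is additive on coprime factors and
`v 5 = 5 = v 2 + v 3`, both have `v` equal to `5 + v w`. The bases `b ≡ 120 (mod 330)` form an
arithmetic progression, hence have positive density.
-/

open Finset

lemma factorization_eq_zero_of_notMem_primeFactors {n p : ℕ} (hp : p ∉ n.primeFactors) :
    n.factorization p = 0 := by
  rwa [← Nat.support_factorization, Finsupp.notMem_support_iff] at hp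

lemma v_prime {p : ℕ} (hp : p.Prime) : v p = p := by
  simp [v, hp.primeFactors, hp.factorization]

lemma v_five_mul_eq_v_six_mul {w : ℕ} (hw : Nat.Coprime 30 w) : v (5 * w) = v (6 * w) := by
  have h5 : Nat.Coprime 5 w := Nat.Coprime.coprime_dvd_left (by norm_num) hw
  have h6 : Nat.Coprime 6 w := Nat.Coprime.coprime_dvd_left (by norm_num) hw
  rw [v_mul_of_coprime h5, v_mul_of_coprime h6, show 6 = 2 * 3 from rfl,
    v_mul_of_coprime (by norm_num), v_prime Nat.prime_two, v_prime Nat.prime_three,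
    v_prime Nat.prime_five]

lemma revDigits_add_mul {b x y : ℕ} (hx : 0 < x) (hxb : x < b) (hyb : y < b) :
    revDigits b (y + b * x) = x + b * y := by
  rw [revDigits, Nat.digits_add b (by omega) y x hyb (Or.inr hx.ne'),
    Nat.digits_of_lt b x hx.ne' hxb]
  simp [Nat.ofDigits]

lemma isVPalindrome_add_mul {b x y : ℕ} (hx : 0 < x) (hxb : x < b) (hy : 0 < y) (hyb : y < b)
    (hxy : x ≠ y) (hv : v (y + b * x) = v (x + b * y)) : IsVPalindrome b (y + b * x) := by
  rw [IsVPalindrome, revDigits_add_mul hx hxb hyb]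
  refine ⟨fun hdvd => ?_, fun heq => hxy ?_, hv⟩
  · rw [Nat.dvd_add_left (dvd_mul_right b x)] at hdvd
    exact absurd (Nat.le_of_dvd hy hdvd) (by omega)
  · have : (b - 1) * x = (b - 1) * y := by
      zify [show 1 ≤ b by omega] at heq ⊢; linarith
    exact Nat.eq_of_mul_eq_mul_left (by omega) this

lemma exists_isVPalindrome_of_mod_eq {b : ℕ} (hb : b % 330 = 120) : ∃ n, IsVPalindrome b n := by
  obtain ⟨t, rfl⟩ : ∃ t, b = 120 + 330 * t := ⟨b / 330, by omega⟩
  refine ⟨(180 * t + 65) + (120 + 330 * t) * (150 * t + 54),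
    isVPalindrome_add_mul (by omega) (by omega) (by omega) (by omega) (by omega) ?_⟩
  set w := (11 + 30 * t) * (119 + 30 * (11 * t))
  have hw : Nat.Coprime 30 w := Nat.Coprime.mul_right (by norm_num) (by norm_num)
  have hn : (180 * t + 65) + (120 + 330 * t) * (150 * t + 54) = 5 * w := by ring
  have hrev : (150 * t + 54) + (120 + 330 * t) * (180 * t + 65) = 6 * w := by ring
  rw [hn, hrev]
  exact v_five_mul_eq_v_six_mul hw

lemma exists_pos_density_of_forall_add_mul {P : ℕ → Prop} [DecidablePred P] {a r : ℕ}
    (hr : 0 < r) (hP : ∀ t, P (a + r * t)) :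
    ∃ δ : ℝ, 0 < δ ∧ ∀ᶠ N : ℕ in Filter.atTop, δ * N ≤ ((range N).filter P).card := by
  refine ⟨1 / (2 * r), by positivity, Filter.eventually_atTop.2 ⟨2 * (a + r), fun N hN => ?_⟩⟩
  set q := (N - a) / r
  have hNa : N - a + a = N := Nat.sub_add_cancel (by omega)
  have hsub : (range q).image (fun t => a + r * t) ⊆ (range N).filter P := by
    intro b hb
    obtain ⟨t, ht, rfl⟩ := mem_image.1 hb
    refine mem_filter.2 ⟨mem_range.2 ?_, hP t⟩
    have := (Nat.le_div_iff_mul_le hr).1 (mem_range.1 ht)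
    linarith [Nat.succ_mul t r, mul_comm t r]
  have hcard : q ≤ ((range N).filter P).card := by
    have := card_le_card hsub
    rwa [card_image_of_injective _ fun s t h => by simpa [hr.ne'] using h, card_range] at this
  have hN2 : N ≤ 2 * r * q := by
    have : N - a < r * (q + 1) := Nat.lt_mul_div_succ _ hr
    linarith
  rw [div_mul_eq_mul_div, one_mul, div_le_iff₀ (by positivity)]
  calc (N : ℝ) ≤ 2 * r * q := by exact_mod_cast hN2
    _ ≤ _ := by rw [mul_comm]; gcongr

open scoped Classical in
theorem stmt_15 :
    (∀ b : ℕ, 0 < b → b % 330 = 120 → ∃ n : ℕ, IsVPalindrome b n) ∧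
    ∃ δ : ℝ, 0 < δ ∧ ∀ᶠ N : ℕ in Filter.atTop,
      δ * N ≤ ((Finset.range N).filter
        (fun b => 2 ≤ b ∧ ∃ n : ℕ, IsVPalindrome b n)).card :=
  ⟨fun _ _ hb => exists_isVPalindrome_of_mod_eq hb,
    exists_pos_density_of_forall_add_mul (a := 120) (r := 330) (by norm_num)
      fun t => ⟨by omega, exists_isVPalindrome_of_mod_eq (by omega)⟩⟩
end
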